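/- arXiv:1408.5508 — 2 statements merged into one kernel-verified Lean document; each statement's English description precedes it below -/
import Mathlib

section
/- Let R → S be a faithfully flat ring homomorphism of commutative Noetherian rings and C a finitely generated R-module. Then the natural map R → Hom_R(C, C) is an isomorphism if and only if the natural map S → Hom_S(C ⊗_R S, C ⊗_R S) is an isomorphism. -/
/-!
In the square formed by `R → End_R C` and `S → End_S (S ⊗ C)`, both vertical maps are base
changes along `R → S`: trivially for `R → S`, and for `End_R C → End_S (S ⊗ C)` because `C` is
finitely presented (`R` is Noetherian) and `S` is flat. Hence the bottom map is the base change
of the top one, and a faithfully flat base change preserves and reflects bijectivity.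
-/

open TensorProduct Function

namespace IsBaseChange

section CommSemiring

variable {R S M M' N N' : Type*} [CommSemiring R] [CommSemiring S] [Algebra R S]
  [AddCommMonoid M] [Module R M] [AddCommMonoid N] [Module R N]
  [AddCommMonoid M'] [Module R M'] [Module S M'] [IsScalarTower R S M']
  [AddCommMonoid N'] [Module R N'] [Module S N'] [IsScalarTower R S N']
  {f : M →ₗ[R] M'} {g : N →ₗ[R] N'} {φ : M →ₗ[R] N} {φ' : M' →ₗ[S] N'}

lemma comp_equiv_eq_equiv_comp_baseChange (hf : IsBaseChange S f) (hg : IsBaseChange S g)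
    (comm : g ∘ₗ φ = φ'.restrictScalars R ∘ₗ f) :
    φ' ∘ₗ hf.equiv = hg.equiv ∘ₗ φ.baseChange S := by
  ext m
  simpa using (LinearMap.congr_fun comm m).symm

end CommSemiring

variable {R S M M' N N' : Type*} [CommRing R] [CommRing S] [Algebra R S]
  [AddCommGroup M] [Module R M] [AddCommGroup N] [Module R N]
  [AddCommMonoid M'] [Module R M'] [Module S M'] [IsScalarTower R S M']
  [AddCommMonoid N'] [Module R N'] [Module S N'] [IsScalarTower R S N']
  {f : M →ₗ[R] M'} {g : N →ₗ[R] N'} {φ : M →ₗ[R] N} {φ' : M' →ₗ[S] N'}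

lemma bijective_iff_of_faithfullyFlat [Module.FaithfullyFlat R S] (hf : IsBaseChange S f)
    (hg : IsBaseChange S g) (comm : g ∘ₗ φ = φ'.restrictScalars R ∘ₗ f) :
    Bijective φ' ↔ Bijective φ := by
  have h : φ' ∘ hf.equiv = hg.equiv ∘ φ.lTensor S := by
    rw [← LinearMap.baseChange_eq_ltensor]
    exact congrArg DFunLike.coe (comp_equiv_eq_equiv_comp_baseChange hf hg comm)
  rw [← hf.equiv.bijective.of_comp_iff, h, hg.equiv.bijective.of_comp_iff',
    Module.FaithfullyFlat.lTensor_bijective_iff_bijective]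

end IsBaseChange

lemma LinearMap.baseChangeHom_comp_lsmul (R S M : Type*) [CommSemiring R] [CommSemiring S]
    [Algebra R S] [AddCommMonoid M] [Module R M] :
    baseChangeHom R S M M ∘ₗ lsmul R M =
      (lsmul S (S ⊗[R] M)).restrictScalars R ∘ₗ Algebra.linearMap R S := by
  ext
  simp

theorem homothety_bijective_iff_of_faithfullyFlat_general
    (R S : Type*) [CommRing R] [CommRing S]
    [IsNoetherianRing R]
    [Algebra R S] [Module.FaithfullyFlat R S]
    (C : Type*) [AddCommGroup C] [Module R C] [Module.Finite R C] :
    Function.Bijective (LinearMap.lsmul R C) ↔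
      Function.Bijective (LinearMap.lsmul S (TensorProduct R S C)) := by
  have := Module.finitePresentation_of_finite R C
  exact (IsBaseChange.bijective_iff_of_faithfullyFlat (IsBaseChange.linearMap R S)
    (Module.FinitePresentation.isBaseChange_map R C C S)
    (LinearMap.baseChangeHom_comp_lsmul R S C)).symm

/-- Faithfully flat base change preserves and reflects the homothety map being an
isomorphism: for a faithfully flat map `R → S` of commutative Noetherian rings and a
finitely generated `R`-module `C`, the natural map `R → Hom_R(C, C)` is an isomorphism
iff the natural map `S → Hom_S(C ⊗_R S, C ⊗_R S)` is one. -/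
theorem homothety_bijective_iff_of_faithfullyFlat
    (R S : Type*) [CommRing R] [CommRing S]
    [IsNoetherianRing R] [IsNoetherianRing S]
    [Algebra R S] [Module.FaithfullyFlat R S]
    (C : Type*) [AddCommGroup C] [Module R C] [Module.Finite R C] :
    Function.Bijective (LinearMap.lsmul R C) ↔
      Function.Bijective (LinearMap.lsmul S (TensorProduct R S C)) :=
  homothety_bijective_iff_of_faithfullyFlat_general R S C
end

section
/- Let k be a field, S a commutative k-algebra, and M, N S-modules. Suppose f ∈ M and g ∈ N are indivisible (i.e., cannot be written as aν with a a nonunit of S), and γ ∈ M, ρ ∈ N are not unit multiples of f and g respectively. Suppose there exist k-bases E of M, F of N, and X of S with f, γ ∈ E and g, ρ ∈ F, such that for every ξ ∈ X, ε ∈ E, η ∈ F, the product ξε is a k-scalar multiple of an element of E and ξη is a k-scalar multiple of an element of F. Then f ⊗ g − γ ⊗ ρ is nonzero in M ⊗_S N. -/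
open TensorProduct

/-!
Say that `i` reaches `p` if a chain of basis elements of `S` carries `E i` step by step to
nonzero multiples of basis vectors, ending at a multiple of `E p`. When `f = E p` is
indivisible, every `E i` with `i` reaching `p` is a unit multiple of `f`, while the basis vectors
that do not reach `p` span an `S`-submodule `M'`. So `M ⧸ M'` is cyclic, generated by the image
of `f`, and `γ ∈ M'`; likewise for `N` and `g`. Hence `f ⊗ g - γ ⊗ ρ` maps to `f̄ ⊗ ḡ` in
`M ⧸ M' ⊗ N ⧸ N'`, which vanishes only if `1 = a + b` with `a • f ∈ M'` and `b • g ∈ N'`.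
Split `b = b₁ + b₂` along the basis elements of `S` that are units and those that are not:
non-units push `f` and `g` into `M'` and `N'`, units keep them in the span of the reaching
basis vectors, so `b₁ • f = f` and `b₁ • g = 0`, which is absurd since `b₁` is then a unit.
-/

def Indivisible (S : Type*) {P : Type*} [Monoid S] [SMul S P] (p : P) : Prop :=
  ∀ (a : S) (ν : P), p = a • ν → IsUnit a

theorem Indivisible.isUnit_of_smul_eq_smul {S P : Type*} [Monoid S] [MulAction S P] {p : P}
    (hp : Indivisible S p) {x u : S} (hu : IsUnit u) (h : x • p = u • p) : IsUnit x := by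
  obtain ⟨u, rfl⟩ := hu
  rw [← Units.isUnit_units_mul u⁻¹]
  exact hp _ _ (by rw [mul_smul, h, smul_smul, Units.inv_mul, one_smul])

theorem mem_torsionOf_mkQ_iff {S P : Type*} [Ring S] [AddCommGroup P] [Module S P]
    {N : Submodule S P} {m : P} {x : S} : x ∈ Ideal.torsionOf S (P ⧸ N) (N.mkQ m) ↔ x • m ∈ N := by
  rw [Ideal.mem_torsionOf_iff, Submodule.mkQ_apply, ← Submodule.Quotient.mk_smul,
    Submodule.Quotient.mk_eq_zero]

theorem tmul_ne_zero_of_span_singleton_eq_top {S P Q : Type*} [CommRing S]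
    [AddCommGroup P] [Module S P] [AddCommGroup Q] [Module S Q] {p : P} {q : Q}
    (hp : Submodule.span S {p} = ⊤) (hq : Submodule.span S {q} = ⊤)
    (h : Ideal.torsionOf S P p ⊔ Ideal.torsionOf S Q q ≠ ⊤) : p ⊗ₜ[S] q ≠ 0 := by
  intro hpq
  set I := Ideal.torsionOf S P p
  let e : P ≃ₗ[S] S ⧸ I :=
    ((Ideal.quotTorsionOfEquivSpanSingleton S P p).trans (LinearEquiv.ofTop _ hp)).symm
  have hep : e p = Submodule.Quotient.mk 1 := by
    rw [LinearEquiv.symm_apply_eq]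
    exact (one_smul S p).symm
  -- `(S ⧸ I) ⊗ Q ≃ Q ⧸ I • Q` sends `e p ⊗ q` to the class of `q`
  have hmk : (Submodule.Quotient.mk q : Q ⧸ I • (⊤ : Submodule S Q)) = 0 := by
    simpa [hep] using congrArg (quotTensorEquivQuotSMul Q I ∘ e.toLinearMap.rTensor Q) hpq
  rw [Submodule.Quotient.mk_eq_zero, ← hq, Submodule.mem_smul_span_singleton] at hmk
  obtain ⟨y, hyI, hy⟩ := hmk
  have hy' : 1 - y ∈ Ideal.torsionOf S Q q := by
    rw [Ideal.mem_torsionOf_iff, sub_smul, one_smul, hy, sub_self]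
  exact h ((Ideal.eq_top_iff_one _).2 (by simpa using Submodule.add_mem_sup hyI hy'))

section BasisSMul

variable {k S P ιS : Type*} [CommSemiring k] [Semiring S] [Algebra k S] [AddCommMonoid P]
  [Module S P] [Module k P] [IsScalarTower k S P]

theorem smul_mem_of_mem_span {N : Submodule k P} {A : Set S} {m : P}
    (hA : ∀ a ∈ A, a • m ∈ N) {x : S} (hx : x ∈ Submodule.span k A) : x • m ∈ N := by
  induction hx using Submodule.span_induction with
  | mem a ha => exact hA a ha
  | zero => simp
  | add x y _ _ hx hy => rw [add_smul]; exact N.add_mem hx hy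
  | smul c x _ hx => rw [smul_assoc]; exact N.smul_mem c hx

def Submodule.ofBasisSMulMem (X : Module.Basis ιS k S) (N : Submodule k P)
    (hN : ∀ t, ∀ m ∈ N, X t • m ∈ N) : Submodule S P where
  __ := N.toAddSubmonoid
  smul_mem' x m hm := smul_mem_of_mem_span (A := Set.range X) (by simpa using (hN · m hm))
    (X.span_eq ▸ Submodule.mem_top)

end BasisSMul

section Monomial

variable {k S P ιS ιP : Type*} [Field k] [Ring S] [Algebra k S] [AddCommGroup P]
  [Module S P] [Module k P] [IsScalarTower k S P]

variable (X : Module.Basis ιS k S) (G : Module.Basis ιP k P)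

def MonomialStep (i j : ιP) : Prop := ∃ (s : ιS) (d : k), d ≠ 0 ∧ X s • G i = d • G j

def reachingIndices (p : ιP) : Set ιP := {i | Relation.ReflTransGen (MonomialStep X G) i p}

variable (hG : ∀ s e, ∃ (c : k) (i : ιP), X s • G e = c • G i)

def unreachingSpan (p : ιP) : Submodule S P :=
  Submodule.ofBasisSMulMem X (Submodule.span k (G '' (reachingIndices X G p)ᶜ)) fun t m hm => by
    induction hm using Submodule.span_induction with
    | mem _ hm =>
      obtain ⟨j, hj, rfl⟩ := hm
      obtain ⟨c, i, hc⟩ := hG t j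
      rcases eq_or_ne c 0 with rfl | hc0
      · simp [hc]
      · rw [hc]
        exact Submodule.smul_mem _ _ <| Submodule.subset_span
          ⟨i, fun hi => hj (.head ⟨t, c, hc0, hc⟩ hi), rfl⟩
    | zero => simp
    | add x y _ _ hx hy => rw [smul_add]; exact Submodule.add_mem _ hx hy
    | smul a x _ hx => rw [smul_comm]; exact Submodule.smul_mem _ _ hx

variable {X G} {p : ιP}

theorem exists_isUnit_eq_smul_of_mem_reachingIndices (hp : Indivisible S (G p)) {i : ιP}
    (hi : i ∈ reachingIndices X G p) : ∃ w : S, IsUnit w ∧ G i = w • G p := by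
  induction hi using Relation.ReflTransGen.head_induction_on with
  | refl => exact ⟨1, isUnit_one, (one_smul _ _).symm⟩
  | @head i j hstep _ ih =>
    obtain ⟨s, d, hd, hs⟩ := hstep
    obtain ⟨w, hw, hGw⟩ := ih
    obtain ⟨v, hv⟩ : IsUnit (d • w) := by simpa using hw.smul (Units.mk0 d hd)
    have hpi : G p = ((↑v⁻¹ : S) * X s) • G i := by
      rw [mul_smul, hs, hGw, ← smul_assoc d w (G p), ← hv, smul_smul, Units.inv_mul, one_smul]
    obtain ⟨u, hu⟩ := hp _ _ hpi
    exact ⟨↑u⁻¹, u⁻¹.isUnit, by rw [hpi, ← hu, smul_smul, Units.inv_mul, one_smul]⟩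

theorem basis_mem_unreachingSpan {i : ιP} (hi : i ∉ reachingIndices X G p) :
    G i ∈ unreachingSpan X G hG p :=
  Submodule.subset_span ⟨i, hi, rfl⟩

theorem eq_zero_of_mem_unreachingSpan_of_mem_span {m : P} (h₁ : m ∈ unreachingSpan X G hG p)
    (h₂ : m ∈ Submodule.span k (G '' reachingIndices X G p)) : m = 0 :=
  Submodule.disjoint_def.1 (G.linearIndependent.disjoint_span_image disjoint_compl_left) m h₁ h₂

theorem smul_mem_unreachingSpan_of_mem_span_nonunits (hp : Indivisible S (G p)) {x : S}
    (hx : x ∈ Submodule.span k (X '' {s | IsUnit (X s)}ᶜ)) :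
    x • G p ∈ unreachingSpan X G hG p := by
  refine smul_mem_of_mem_span (N := (unreachingSpan X G hG p).restrictScalars k) ?_ hx
  rintro _ ⟨s, hs, rfl⟩
  obtain ⟨c, i, hc⟩ := hG s p
  rcases eq_or_ne c 0 with rfl | hc0
  · simp [hc]
  by_cases hi : i ∈ reachingIndices X G p
  · obtain ⟨w, hw, hGi⟩ := exists_isUnit_eq_smul_of_mem_reachingIndices hp hi
    have hcw : IsUnit (c • w) := by simpa using hw.smul (Units.mk0 c hc0)
    exact absurd (hp.isUnit_of_smul_eq_smul hcw (by rw [hc, hGi, smul_assoc])) hs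
  · have hGi : G i ∈ unreachingSpan X G hG p := basis_mem_unreachingSpan hG hi
    rw [hc]
    exact Submodule.smul_of_tower_mem _ c hGi

theorem smul_mem_span_reachingIndices_of_mem_span_units
    (hG : ∀ s e, ∃ (c : k) (i : ιP), X s • G e = c • G i) {x : S}
    (hx : x ∈ Submodule.span k (X '' {s | IsUnit (X s)})) :
    x • G p ∈ Submodule.span k (G '' reachingIndices X G p) := by
  refine smul_mem_of_mem_span ?_ hx
  rintro _ ⟨s, ⟨u, hu⟩, rfl⟩
  obtain ⟨c, i, hc⟩ := hG s p
  by_cases hi : i ∈ reachingIndices X G p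
  · rw [hc]
    exact (Submodule.span k _).smul_mem c (Submodule.subset_span ⟨i, hi, rfl⟩)
  · have hs : X s • G p ∈ unreachingSpan X G hG p := by
      rw [hc]
      exact Submodule.smul_of_tower_mem _ c (basis_mem_unreachingSpan hG hi)
    have hp : G p ∈ unreachingSpan X G hG p := by
      simpa [← hu, smul_smul] using Submodule.smul_mem _ (↑u⁻¹ : S) hs
    exact absurd (eq_zero_of_mem_unreachingSpan_of_mem_span hG hp
      (Submodule.subset_span ⟨p, .refl, rfl⟩)) (G.ne_zero p)

theorem span_singleton_mkQ_eq_top (hp : Indivisible S (G p)) :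
    Submodule.span S {(unreachingSpan X G hG p).mkQ (G p)} = ⊤ := by
  set MU := unreachingSpan X G hG p
  have hbasis : ∀ i, G i ∈ (Submodule.span S {MU.mkQ (G p)}).comap MU.mkQ := by
    intro i
    by_cases hi : i ∈ reachingIndices X G p
    · obtain ⟨w, -, hGi⟩ := exists_isUnit_eq_smul_of_mem_reachingIndices hp hi
      exact Submodule.mem_span_singleton.2 ⟨w, by rw [hGi, map_smul]⟩
    · simp [(Submodule.Quotient.mk_eq_zero MU).2 (basis_mem_unreachingSpan hG hi)]
  have htop := G.span_eq ▸ Submodule.span_le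
    (p := ((Submodule.span S {MU.mkQ (G p)}).comap MU.mkQ).restrictScalars k) |>.2
    (Set.range_subset_iff.2 hbasis)
  refine eq_top_iff.2 fun y _ => ?_
  obtain ⟨m, rfl⟩ := MU.mkQ_surjective y
  exact htop Submodule.mem_top

end Monomial

theorem sup_torsionOf_mkQ_ne_top {k S M N ιS ιM ιN : Type*} [Field k] [CommRing S] [Algebra k S]
    [AddCommGroup M] [AddCommGroup N] [Module S M] [Module S N] [Module k M] [Module k N]
    [IsScalarTower k S M] [IsScalarTower k S N] {X : Module.Basis ιS k S}
    {E : Module.Basis ιM k M} {F : Module.Basis ιN k N}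
    (hE : ∀ s e, ∃ (c : k) (i : ιM), X s • E e = c • E i)
    (hF : ∀ s e, ∃ (c : k) (i : ιN), X s • F e = c • F i) {f₀ : ιM} {g₀ : ιN}
    (hf : Indivisible S (E f₀)) (hg : Indivisible S (F g₀)) :
    Ideal.torsionOf S _ ((unreachingSpan X E hE f₀).mkQ (E f₀)) ⊔
      Ideal.torsionOf S _ ((unreachingSpan X F hF g₀).mkQ (F g₀)) ≠ ⊤ := by
  intro htop
  obtain ⟨a, ha, b, hb, hab⟩ := Submodule.mem_sup.1 (htop ▸ Submodule.mem_top : (1 : S) ∈ _)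
  rw [mem_torsionOf_mkQ_iff] at ha hb
  have hsplit := (Submodule.codisjoint_span_image_of_codisjoint X.span_eq
    (isCompl_compl (x := {s | IsUnit (X s)})).codisjoint).eq_top
  obtain ⟨b₁, hb₁, b₂, hb₂, rfl⟩ := Submodule.mem_sup.1 (hsplit ▸ Submodule.mem_top : b ∈ _)
  have hfix : b₁ • E f₀ = E f₀ := by
    refine sub_eq_zero.1 (eq_zero_of_mem_unreachingSpan_of_mem_span hE (p := f₀) ?_ ?_)
    · have : b₁ • E f₀ - E f₀ = -(a • E f₀ + b₂ • E f₀) := by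
        linear_combination (norm := module) hab • E f₀
      rw [this]
      exact neg_mem (add_mem ha (smul_mem_unreachingSpan_of_mem_span_nonunits hE hf hb₂))
    · exact sub_mem (smul_mem_span_reachingIndices_of_mem_span_units hE hb₁)
        (Submodule.subset_span ⟨f₀, .refl, rfl⟩)
  have hkill : b₁ • F g₀ = 0 := by
    refine eq_zero_of_mem_unreachingSpan_of_mem_span hF (p := g₀) ?_
      (smul_mem_span_reachingIndices_of_mem_span_units hF hb₁)
    rw [← add_sub_cancel_right b₁ b₂, sub_smul]
    exact sub_mem hb (smul_mem_unreachingSpan_of_mem_span_nonunits hF hg hb₂)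
  exact F.ne_zero g₀ ((hf _ _ hfix.symm).smul_eq_zero.1 hkill)

theorem tmul_sub_tmul_ne_zero_of_monomial_bases_general
    (k : Type*) [Field k] (S : Type*) [CommRing S] [Algebra k S]
    (M N : Type*) [AddCommGroup M] [AddCommGroup N]
    [Module S M] [Module S N] [Module k M] [Module k N]
    [IsScalarTower k S M] [IsScalarTower k S N]
    (f γ : M) (g ρ : N)
    -- `f` and `g` are indivisible
    (hf : ∀ (a : S) (ν : M), f = a • ν → IsUnit a)
    (hg : ∀ (a : S) (ν : N), g = a • ν → IsUnit a)
    -- `γ` is not a unit multiple of `f`, and `ρ` is not a unit multiple of `g`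
    (hγ : ∀ u : S, IsUnit u → γ ≠ u • f)
    -- the `k`-bases `E`, `F`, `X` of `M`, `N`, `S`
    {ιM ιN ιS : Type*} (E : Module.Basis ιM k M) (F : Module.Basis ιN k N) (X : Module.Basis ιS k S)
    (if₀ iγ : ιM) (hfE : E if₀ = f) (hγE : E iγ = γ)
    (ig₀ : ιN) (hgF : F ig₀ = g)
    -- products of basis elements are scalar multiples of basis elements
    (hEX : ∀ (s : ιS) (e : ιM), ∃ (c : k) (i : ιM), X s • E e = c • E i)
    (hFX : ∀ (s : ιS) (e : ιN), ∃ (c : k) (i : ιN), X s • F e = c • F i) :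
    f ⊗ₜ[S] g - γ ⊗ₜ[S] ρ ≠ 0 := by
  subst hfE hγE hgF
  have hγ₀ : (unreachingSpan X E hEX if₀).mkQ (E iγ) = 0 := by
    refine (Submodule.Quotient.mk_eq_zero _).2 (basis_mem_unreachingSpan hEX fun hi => ?_)
    obtain ⟨w, hw, hγw⟩ := exists_isUnit_eq_smul_of_mem_reachingIndices hf hi
    exact hγ w hw hγw
  intro h
  refine tmul_ne_zero_of_span_singleton_eq_top (span_singleton_mkQ_eq_top hEX hf)
    (span_singleton_mkQ_eq_top hFX hg) (sup_torsionOf_mkQ_ne_top hEX hFX hf hg) ?_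
  simpa [hγ₀] using congrArg (TensorProduct.map (unreachingSpan X E hEX if₀).mkQ
    (unreachingSpan X F hFX ig₀).mkQ) h

/-- Let `k` be a field, `S` a commutative `k`-algebra, and `M`, `N` `S`-modules.
Suppose `f ∈ M` and `g ∈ N` are indivisible, and `γ ∈ M`, `ρ ∈ N` are not unit
multiples of `f` and `g` respectively.  If there exist `k`-bases `E`, `F`, `X` of
`M`, `N`, `S` with `f, γ ∈ E` and `g, ρ ∈ F` such that the product of any basis
element of `S` with any basis element of `M` (resp. `N`) is a `k`-scalar multiple of
a basis element of `M` (resp. `N`), then `f ⊗ g - γ ⊗ ρ ≠ 0` in `M ⊗_S N`. -/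
theorem tmul_sub_tmul_ne_zero_of_monomial_bases
    (k : Type*) [Field k] (S : Type*) [CommRing S] [Algebra k S]
    (M N : Type*) [AddCommGroup M] [AddCommGroup N]
    [Module S M] [Module S N] [Module k M] [Module k N]
    [IsScalarTower k S M] [IsScalarTower k S N]
    (f γ : M) (g ρ : N)
    -- `f` and `g` are indivisible
    (hf : ∀ (a : S) (ν : M), f = a • ν → IsUnit a)
    (hg : ∀ (a : S) (ν : N), g = a • ν → IsUnit a)
    -- `γ` is not a unit multiple of `f`, and `ρ` is not a unit multiple of `g`
    (hγ : ∀ u : S, IsUnit u → γ ≠ u • f)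
    (hρ : ∀ u : S, IsUnit u → ρ ≠ u • g)
    -- the `k`-bases `E`, `F`, `X` of `M`, `N`, `S`
    {ιM ιN ιS : Type*} (E : Module.Basis ιM k M) (F : Module.Basis ιN k N) (X : Module.Basis ιS k S)
    (if₀ iγ : ιM) (hfE : E if₀ = f) (hγE : E iγ = γ)
    (ig₀ iρ : ιN) (hgF : F ig₀ = g) (hρF : F iρ = ρ)
    -- products of basis elements are scalar multiples of basis elements
    (hEX : ∀ (s : ιS) (e : ιM), ∃ (c : k) (i : ιM), X s • E e = c • E i)
    (hFX : ∀ (s : ιS) (e : ιN), ∃ (c : k) (i : ιN), X s • F e = c • F i) :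
    f ⊗ₜ[S] g - γ ⊗ₜ[S] ρ ≠ 0 :=
  tmul_sub_tmul_ne_zero_of_monomial_bases_general k S M N f γ g ρ hf hg hγ E F X if₀ iγ hfE hγE ig₀
    hgF hEX hFX
end
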